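/- For all integers m ≥ 2 and x ≥ 1 and every codeword c ∈ C(m,x) whose leftmost bit c_{m−1} equals 0, the index of c satisfies 2·g(c) = Σ_{i=0}^{m−2} N(i−x+1, x)·[c_i = 1], where the sum ranges over the positions i with c_i = 1 and any term N(k,x) with k ≤ 1 is interpreted, by convention, as 2. -/

import Mathlib

/-- `noForbidden m x c` says the binary word `c = (c_{m-1}, …, c_0)` contains no contiguous
subword of the form `0 1^y 0` or `1 0^y 1` for any `1 ≤ y ≤ x`. -/
def noForbidden (m x : ℕ) (c : Fin m → Bool) : Prop :=
  ∀ j y : ℕ, 1 ≤ y → y ≤ x → (h : j + y + 1 < m) →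
    ¬ ((∀ k, 1 ≤ k → (hk : k ≤ y) → c ⟨j + k, by omega⟩ = ! c ⟨j, by omega⟩) ∧
        c ⟨j + y + 1, h⟩ = c ⟨j, by omega⟩)

/-- `N(m, x)`: the cardinality of the LOCO code `C(m, x)`. -/
noncomputable def locoN (m x : ℕ) : ℕ := Nat.card {c : Fin m → Bool // noForbidden m x c}

/-- `N(k, x)` extended to integer `k` by the convention `N(k, x) = 2` for `k ≤ 1`. -/
noncomputable def Nex (k : ℤ) (x : ℕ) : ℤ := if k ≤ 1 then 2 else (locoN k.toNat x : ℤ)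

/-- Strict lexicographic order on binary words, comparing bits from `c_{m-1}`
(most significant) down to `c_0`, with `0 < 1`. -/
def lexLt (m : ℕ) (d c : Fin m → Bool) : Prop :=
  ∃ i : Fin m, d i = false ∧ c i = true ∧ ∀ j : Fin m, (i : ℕ) < (j : ℕ) → d j = c j

/-- The index `g(m, x, c)` of a codeword: the number of codewords of `C(m, x)` that
precede `c` in lexicographic order. -/
noncomputable def locoIdx (m x : ℕ) (c : Fin m → Bool) : ℕ :=
  Nat.card {d : Fin m → Bool // noForbidden m x d ∧ lexLt m d c}

/-!
Read from the most significant bit, a word is a codeword iff each of its runs, except the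
first and the last, has length at least `x + 1`. Hence the admissible continuations of a
prefix depend only on its last bit `b` and on the number `t` of further copies of `b` still
required; their number `A(n, t) = admissibleCount x n t` obeys `A(n+1, 0) = A(n, 0) + A(n, x)`, with
`N(n + 1) = 2 A(n, 0)` and `A(i, x) = A(i - x, 0) = N(i - x + 1) / 2`. Counting the smaller
codewords by their leading bit, each `1` of `c` at position `i` contributes `A(i, x)`; inside a
run of `1`s the contributions of the individual bits are not of this form, but their sum is,
by telescoping with the recurrence.
-/

namespace Loco

/-- The `t` most significant bits of `d` (all of `d` if `t ≥ n`) equal `b`. -/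
def LeadingBits {n : ℕ} (d : Fin n → Bool) (t : ℕ) (b : Bool) : Prop :=
  ∀ i : Fin n, n ≤ i + t → d i = b

section LeadingBits

variable {n : ℕ} {d : Fin n → Bool} {t : ℕ} {a b : Bool}

@[simp] lemma leadingBits_zero : LeadingBits d 0 b := fun i h => absurd i.isLt (by omega)

lemma leadingBits_snoc_succ :
    LeadingBits (Fin.snoc d a) (t + 1) b ↔ a = b ∧ LeadingBits d t b := by
  refine ⟨fun h => ⟨by simpa using h (Fin.last n) (by simp), fun i hi => ?_⟩, ?_⟩
  · simpa using h i.castSucc (by simp; omega)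
  · rintro ⟨rfl, h⟩ i hi
    induction i using Fin.lastCases with
    | last => simp
    | cast i => simpa using h i (by simp at hi; omega)

lemma leadingBits_snoc_self : LeadingBits (Fin.snoc d b) t b ↔ LeadingBits d (t - 1) b := by
  cases t with
  | zero => exact iff_of_true leadingBits_zero leadingBits_zero
  | succ t => simp [leadingBits_snoc_succ]

lemma leadingBits_snoc_of_ne (hab : a ≠ b) : LeadingBits (Fin.snoc d a) t b ↔ t = 0 := by
  cases t with
  | zero => simp
  | succ t => simp [leadingBits_snoc_succ, hab]

end LeadingBits

lemma snoc_mk_of_lt {α : Type*} {n : ℕ} (d : Fin n → α) (a : α) {i : ℕ} (hi : i < n) :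
    (Fin.snoc d a : Fin (n + 1) → α) ⟨i, Nat.lt_succ_of_lt hi⟩ = d ⟨i, hi⟩ :=
  Fin.snoc_castSucc (i := ⟨i, hi⟩) ..

section NoForbidden

variable {n x : ℕ} {d : Fin n → Bool} {a : Bool}

lemma noForbidden_of_snoc (h : noForbidden (n + 1) x (Fin.snoc d a)) : noForbidden n x d := by
  refine fun j y hy1 hyx hj ⟨hrun, hend⟩ =>
    h j y hy1 hyx (by omega) ⟨fun k hk1 hk2 => ?_, ?_⟩
  · rw [snoc_mk_of_lt d a (by omega : j + k < n), snoc_mk_of_lt d a (by omega : j < n)]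
    exact hrun k hk1 hk2
  · rwa [snoc_mk_of_lt d a hj, snoc_mk_of_lt d a (by omega : j < n)]

/- If the top bit of `d` is `!a` and some bit within distance `x` below it is `a`, then the
nearest such bit, the run of `!a` above it and the new top bit `a` form a forbidden pattern. -/
lemma leadingBits_of_noForbidden_snoc (h : noForbidden (n + 1) x (Fin.snoc d a)) :
    LeadingBits d 1 a ∨ LeadingBits d (x + 1) (!a) := by
  by_contra hcon
  simp only [LeadingBits, not_or, not_forall, exists_prop] at hcon
  obtain ⟨⟨i, hi, hdi⟩, ⟨i', hi', hdi'⟩⟩ := hcon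
  have hQi' : ∃ hk : n - 1 - i' < n, d ⟨n - 1 - (n - 1 - i'), by omega⟩ = a := by
    refine ⟨by omega, ?_⟩
    rw [show (⟨n - 1 - (n - 1 - i'), by omega⟩ : Fin n) = i' from Fin.ext (by simp; omega)]
    exact Bool.ne_not.mp hdi'
  have hQ : ∃ k, ∃ hk : k < n, d ⟨n - 1 - k, by omega⟩ = a := ⟨_, hQi'⟩
  classical
  obtain ⟨hk₀n, hdk₀⟩ := Nat.find_spec hQ
  have hbelow : ∀ k < Nat.find hQ, (hk : k < n) → d ⟨n - 1 - k, by omega⟩ = !a :=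
    fun k hk hkn => Bool.eq_not.mpr fun h => Nat.find_min hQ hk ⟨hkn, h⟩
  have hk₀pos : 1 ≤ Nat.find hQ := by
    by_contra h0
    simp only [show Nat.find hQ = 0 by omega] at hdk₀
    exact hdi (by rwa [show i = ⟨n - 1 - 0, by omega⟩ from Fin.ext (by simp; omega)])
  have hk₀x : Nat.find hQ ≤ x := (Nat.find_min' hQ hQi').trans (by omega)
  refine h (n - 1 - Nat.find hQ) (Nat.find hQ) hk₀pos hk₀x (by omega)
    ⟨fun k hk1 hk2 => ?_, ?_⟩
  · rw [snoc_mk_of_lt d a (by omega : n - 1 - Nat.find hQ + k < n),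
      snoc_mk_of_lt d a (by omega : n - 1 - Nat.find hQ < n),
      show (⟨n - 1 - Nat.find hQ + k, by omega⟩ : Fin n) =
        ⟨n - 1 - (Nat.find hQ - k), by omega⟩ from Fin.ext (by simp; omega),
      hbelow _ (by omega) (by omega), hdk₀]
  · rw [snoc_mk_of_lt d a (by omega : n - 1 - Nat.find hQ < n), hdk₀,
      show (⟨n - 1 - Nat.find hQ + Nat.find hQ + 1, by omega⟩ : Fin (n + 1)) = Fin.last n from
        Fin.ext (by simp; omega), Fin.snoc_last]

lemma noForbidden_snoc :
    noForbidden (n + 1) x (Fin.snoc d a) ↔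
      noForbidden n x d ∧ (LeadingBits d 1 a ∨ LeadingBits d (x + 1) (!a)) := by
  refine ⟨fun h => ⟨noForbidden_of_snoc h, leadingBits_of_noForbidden_snoc h⟩, ?_⟩
  rintro ⟨hd, hlead⟩ j y hy1 hyx hj ⟨hrun, hend⟩
  rcases Nat.lt_or_ge (j + y + 1) n with hlt | hge
  · refine hd j y hy1 hyx hlt ⟨fun k hk1 hk2 => ?_, ?_⟩
    · have := hrun k hk1 hk2
      rwa [snoc_mk_of_lt d a (by omega : j + k < n), snoc_mk_of_lt d a (by omega : j < n)] at this
    · rwa [snoc_mk_of_lt d a hlt, snoc_mk_of_lt d a (by omega : j < n)] at hend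
  · have htop := hrun y hy1 le_rfl
    rw [snoc_mk_of_lt d a (by omega : j + y < n), snoc_mk_of_lt d a (by omega : j < n)] at htop
    rw [show (⟨j + y + 1, hj⟩ : Fin (n + 1)) = Fin.last n from Fin.ext (by simp; omega),
      Fin.snoc_last, snoc_mk_of_lt d a (by omega : j < n)] at hend
    rcases hlead with h1 | h2
    · rw [h1 ⟨j + y, by omega⟩ (by simp; omega), ← hend] at htop
      simp at htop
    · have h := h2 ⟨j, by omega⟩ (by simp; omega)
      rw [← hend] at h
      simp at h

end NoForbidden

/-- `d` may be written below a bit `b` whose run must still be continued by `t` copies of `b`. -/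
def Admissible (x t : ℕ) (b : Bool) {n : ℕ} (d : Fin n → Bool) : Prop :=
  noForbidden (n + 1) x (Fin.snoc d b) ∧ LeadingBits d t b

lemma admissible_snoc {x t n : ℕ} {a b : Bool} {d : Fin n → Bool} :
    Admissible x t b (Fin.snoc d a) ↔
      if a = b then Admissible x (t - 1) b d else t = 0 ∧ Admissible x x a d := by
  split_ifs with hab
  · subst hab
    simp [Admissible, noForbidden_snoc (d := Fin.snoc d a), leadingBits_snoc_self,
      leadingBits_snoc_succ]
  · have hba : (!b) = a := (Bool.eq_not.mpr hab).symm
    simp [Admissible, noForbidden_snoc (d := Fin.snoc d a), leadingBits_snoc_of_ne hab,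
      leadingBits_snoc_succ, hba, and_comm]

lemma card_subtype_snoc {n : ℕ} (P : (Fin (n + 1) → Bool) → Prop) :
    Nat.card {d // P d} =
      Nat.card {d : Fin n → Bool // P (Fin.snoc d false)} +
        Nat.card {d : Fin n → Bool // P (Fin.snoc d true)} := by
  have e : {d // P d} ≃ Σ a : Bool, {d : Fin n → Bool // P (Fin.snoc d a)} :=
    ((Fin.snocEquiv fun _ => Bool).subtypeEquiv fun _ => Iff.rfl).symm.trans
      (Equiv.subtypeProdEquivSigmaSubtype fun a d => P (Fin.snoc d a))
  rw [Nat.card_congr e, Nat.card_sigma, Fintype.sum_bool, add_comm]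

def admissibleCount (x : ℕ) : ℕ → ℕ → ℕ
  | 0, _ => 1
  | n + 1, 0 => admissibleCount x n 0 + admissibleCount x n x
  | n + 1, t + 1 => admissibleCount x n t

lemma card_admissible (x : ℕ) :
    ∀ n t b, Nat.card {d : Fin n → Bool // Admissible x t b d} = admissibleCount x n t
  | 0, t, b => by
    have : ∀ d : Fin 0 → Bool, Admissible x t b d :=
      fun d => ⟨fun j y hy _ h => by omega, fun i => i.elim0⟩
    simp [this, admissibleCount]
  | n + 1, t, b => by
    rw [card_subtype_snoc]
    cases b <;> cases t <;> simp [admissible_snoc, card_admissible x n, admissibleCount, add_comm]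

lemma admissibleCount_eq_sub (x : ℕ) :
    ∀ n t, admissibleCount x n t = admissibleCount x (n - t) 0
  | 0, _ => by simp [admissibleCount]
  | n + 1, 0 => rfl
  | n + 1, t + 1 => by simp [admissibleCount, admissibleCount_eq_sub x n t]

lemma locoN_succ (n x : ℕ) : locoN (n + 1) x = 2 * admissibleCount x n 0 := by
  have h (b : Bool) : Nat.card {d : Fin n → Bool // noForbidden (n + 1) x (Fin.snoc d b)} =
      admissibleCount x n 0 := by
    simpa [Admissible] using card_admissible x n 0 b
  rw [locoN, card_subtype_snoc, h, h, two_mul]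

lemma nex_sub_add_one (x i : ℕ) : Nex ((i : ℤ) - x + 1) x = 2 * admissibleCount x i x := by
  rw [Nex, admissibleCount_eq_sub]
  split_ifs with h
  · simp [show i - x = 0 by omega, admissibleCount]
  · rw [show ((i : ℤ) - x + 1).toNat = i - x + 1 by omega, locoN_succ]
    push_cast
    rfl

lemma lexLt_snoc {n : ℕ} {d c : Fin n → Bool} {a b : Bool} :
    lexLt (n + 1) (Fin.snoc d a) (Fin.snoc c b) ↔
      (a = false ∧ b = true) ∨ (a = b ∧ lexLt n d c) := by
  constructor
  · rintro ⟨i, hdi, hci, hup⟩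
    induction i using Fin.lastCases with
    | last => simp_all
    | cast i =>
      have hab : a = b := by simpa using hup (Fin.last n) (by simp)
      refine .inr ⟨hab, i, by simpa using hdi, by simpa using hci, fun j hj => ?_⟩
      simpa using hup j.castSucc (by simpa using hj)
  · rintro (⟨rfl, rfl⟩ | ⟨rfl, i, hdi, hci, hup⟩)
    · exact ⟨Fin.last n, by simp, by simp, fun j hj => absurd j.isLt (by simp at hj; omega)⟩
    · refine ⟨i.castSucc, by simpa using hdi, by simpa using hci, fun j hj => ?_⟩
      induction j using Fin.lastCases with
      | last => simp
      | cast j => simpa using hup j (by simpa using hj)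

lemma locoIdx_snoc_false (n x : ℕ) (c : Fin n → Bool) :
    locoIdx (n + 1) x (Fin.snoc c false) =
      Nat.card {d // Admissible x 0 false d ∧ lexLt n d c} := by
  rw [locoIdx, card_subtype_snoc]
  simp [lexLt_snoc, Admissible]

def lexWeight (x : ℕ) {n : ℕ} (c : Fin n → Bool) : ℕ :=
  ∑ i : Fin n, if c i then admissibleCount x i x else 0

lemma lexWeight_snoc {x n : ℕ} (c : Fin n → Bool) (a : Bool) :
    lexWeight x (Fin.snoc c a) = lexWeight x c + if a then admissibleCount x n x else 0 := by
  simp [lexWeight, Fin.sum_univ_castSucc]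

/- For `b = true` the correction `A(n, 0) - A(n, t)` is the number of tails that may follow a
free `1` but not a `1` that must be repeated `t` more times. -/
lemma card_admissible_lexLt (x : ℕ) : ∀ n t b (c : Fin n → Bool), Admissible x t b c →
    Nat.card {d // Admissible x t b d ∧ lexLt n d c} + (if b then admissibleCount x n 0 else 0) =
      lexWeight x c + (if b then admissibleCount x n t else 0)
  | 0, t, b, c, _ => by
    have : ∀ d : Fin 0 → Bool, ¬ lexLt 0 d c := fun d ⟨i, _⟩ => i.elim0
    simp [this, lexWeight, admissibleCount]
  | n + 1, t, b, c, hc => by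
    obtain ⟨c, a, rfl⟩ : ∃ c' a, c = Fin.snoc c' a :=
      ⟨Fin.init c, c (Fin.last n), (Fin.snoc_init_self c).symm⟩
    have ih := card_admissible_lexLt x n
    rw [card_subtype_snoc, lexWeight_snoc]
    rw [admissible_snoc] at hc
    cases a <;> cases b <;> cases t <;>
      simp [admissible_snoc, lexLt_snoc, card_admissible, admissibleCount] at hc ⊢ <;>
      have := ih _ _ c hc <;> simp only [Bool.false_eq_true, ↓reduceIte] at this <;> omega

end Loco

open Loco in
theorem loco_index_formula_lmb_zero (m x : ℕ) (hm : 2 ≤ m)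
    (c : Fin m → Bool) (hc : noForbidden m x c)
    (h0 : c ⟨m - 1, by omega⟩ = false) :
    2 * (locoIdx m x c : ℤ)
      = ∑ i : Fin (m - 1),
          if c (Fin.castLE (by omega) i) = true then
            Nex (((i : ℕ) : ℤ) - (x : ℤ) + 1) x
          else 0 := by
  obtain ⟨n, rfl⟩ : ∃ n, m = n + 1 := ⟨m - 1, by omega⟩
  have hsnoc : Fin.snoc (Fin.init c) false = c := by
    have := Fin.snoc_init_self c
    rwa [show c (Fin.last n) = false from h0] at this
  have hadm : Admissible x 0 false (Fin.init c) := by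
    simpa [Admissible, hsnoc] using hc
  have hcount := card_admissible_lexLt x n 0 false (Fin.init c) hadm
  simp only [Bool.false_eq_true, if_false, add_zero] at hcount
  conv_lhs => rw [← hsnoc, locoIdx_snoc_false, hcount, lexWeight, Nat.cast_sum, Finset.mul_sum]
  refine Finset.sum_congr rfl fun i _ => ?_
  rw [show Fin.init c i = c (Fin.castLE (by omega) i) from rfl]
  split_ifs <;> simp [nex_sub_add_one]
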